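/- arXiv:0903.4527 — 2 statements merged into one kernel-verified Lean document; each statement's English description precedes it below -/
import Mathlib

section
/- Let G = (V,E) be a finite connected (q+1)-regular simple graph on n = |V| vertices with q ≥ 1. Then for every real u with u ≠ 0 and u² ≠ 1, θ_G(u², √−1) = (1 − u²)^{|E|−n} · α_G(1/u + q·u) · u^n; equivalently, ω_G(u²) = α_G(1/u + qu) u^n. -/
/-- The polynomials `f_n` over ℂ defined by `f_0 = 1`, `f_1 = 0`,
`f_{n+1}(x) = x f_n(x) + f_{n-1}(x)`. -/
def chebFC : ℕ → ℂ → ℂ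
  | 0, _ => 1
  | 1, _ => 0
  | n + 2, x => x * chebFC (n + 1) x + chebFC n x

/-- `degE i s` : the number of edges of `s` incident to `i`. -/
def degE {V : Type} [DecidableEq V] (i : V) (s : Finset (Sym2 V)) : ℕ :=
  (s.filter fun e => i ∈ e).card

/-- The graph polynomial `θ_G(β, ξ)` of a simple graph, evaluated at `ξ = √-1`:
`θ_G(β, √-1) = Σ_{s ⊆ E} β^{|s|} Π_{i∈V} f_{d_i(s)}(√-1 - (√-1)⁻¹)`. -/
noncomputable def thetaGI {V : Type} [Fintype V] [DecidableEq V]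
    (G : SimpleGraph V) [DecidableRel G.Adj] (β : ℂ) : ℂ :=
  ∑ s ∈ G.edgeFinset.powerset, β ^ s.card *
    ∏ i : V, chebFC (degE i s) (Complex.I - Complex.I⁻¹)

/-- `numMatchings G k` is the number of `k`-matchings of `G`: sets of `k` edges,
no two of which share a vertex. -/
def numMatchings {V : Type} [Fintype V] [DecidableEq V]
    (G : SimpleGraph V) [DecidableRel G.Adj] (k : ℕ) : ℕ :=
  (G.edgeFinset.powerset.filter fun M =>
    M.card = k ∧ ∀ i : V, degE i M ≤ 1).card

/-!
Since `f_d(2√-1) = (1 - d) (√-1)^d` and `Σ_v d_v(s) = 2|s|`, one has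
`θ_G(β) = Σ_s (-β)^|s| Π_v (1 - d_v(s))`. For `γ = -β/(1-β)` the weights `(-β)^|s|` are
`(1-β)^|E|` times the (signed) law of a random edge set containing each edge independently with
probability `γ`. Under it `1 - d_v(s) = (1 - (q+1)γ) - Σ_{e ∋ v} ξ_e` with independent centred
`ξ_e = [e ∈ s] - γ`, so expanding the product over vertices only the terms in which every `ξ_e`
occurs twice (once from each endpoint) survive. Those edges form a matching, each contributes
`E ξ_e² = γ - γ²`, and the remaining vertices contribute `1 - (q+1)γ`. The expansion is carried
out by induction on the edge set, removing one edge together with both its endpoints. Finally, for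
`β = u²` one has `(1-β)² (γ - γ²) = -u²` and `(1-β) (1 - (q+1)γ) = u (1/u + q u)`.
-/

open Finset

section

variable {V : Type} [DecidableEq V]

lemma degE_insert {s : Finset (Sym2 V)} {e : Sym2 V} (he : e ∉ s) (v : V) :
    degE v (insert e s) = degE v s + if v ∈ e then 1 else 0 := by
  unfold degE
  rw [filter_insert]
  split_ifs with hv
  · rw [card_insert_of_notMem fun h => he (mem_filter.mp h).1]
  · rfl

lemma sum_degE [Fintype V] {s : Finset (Sym2 V)} (hs : ∀ e ∈ s, ¬ e.IsDiag) :
    ∑ v, degE v s = 2 * #s := by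
  have := sum_card_bipartiteAbove_eq_sum_card_bipartiteBelow (s := univ) (t := s)
    (r := fun v e => v ∈ e)
  unfold degE
  simp only [bipartiteAbove, bipartiteBelow] at this
  rw [this, sum_congr rfl fun e he => ?_, sum_const, smul_eq_mul, mul_comm]
  rw [← Sym2.card_toFinset_of_not_isDiag e (hs e he)]
  congr 1
  ext v
  simp

lemma prod_eq_mul_prod_sdiff_pair {x y : V} (hxy : x ≠ y) (A : Finset V) (f : V → ℂ) :
    ∏ v ∈ A, f v =
      (if x ∈ A then f x else 1) * (if y ∈ A then f y else 1) * ∏ v ∈ A \ {x, y}, f v := by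
  rw [← prod_inter_mul_prod_sdiff A {x, y}]
  by_cases hx : x ∈ A <;> by_cases hy : y ∈ A <;> simp [hx, hy, hxy]

/-- Averaging over the state of the single edge `e`: its centred indicator has mean `0` and
second moment `t - t²`. -/
lemma prod_add_indicator_average {e : Sym2 V} (he : ¬ e.IsDiag) (A : Finset V) (a : V → ℂ)
    (t : ℂ) :
    (1 - t) * ∏ v ∈ A, (a v + t * if v ∈ e then 1 else 0) +
        t * ∏ v ∈ A, (a v + (t - 1) * if v ∈ e then 1 else 0) =
      ∏ v ∈ A, a v + (if e ∈ A.sym2 then t - t ^ 2 else 0) * ∏ v ∈ A \ e.toFinset, a v := by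
  induction e with
  | _ x y =>
    have hxy : x ≠ y := by simpa using he
    simp only [prod_eq_mul_prod_sdiff_pair hxy A, Sym2.toFinset_mk_eq, Sym2.mem_iff,
      mk_mem_sym2_iff]
    have hrest : ∀ c : ℂ, ∏ v ∈ A \ {x, y}, (a v + c * if v = x ∨ v = y then 1 else 0) =
        ∏ v ∈ A \ {x, y}, a v := fun c =>
      prod_congr rfl fun v hv => by simp at hv; simp [hv.2.1, hv.2.2]
    rw [hrest, hrest]
    by_cases hx : x ∈ A <;> by_cases hy : y ∈ A <;> simp [hx, hy, hxy, hxy.symm] <;> ring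

/-- The weight of a vertex covered `d` times by an edge set, chosen so that the product over all
vertices is the indicator of a matching covering only vertices of `A`, times `δ v` for each
uncovered `v ∈ A`. -/
def matchingFactor (δ : V → ℂ) (A : Finset V) (v : V) : ℕ → ℂ
  | 0 => if v ∈ A then δ v else 1
  | 1 => if v ∈ A then 1 else 0
  | _ + 2 => 0

lemma matchingFactor_add_indicator (δ : V → ℂ) (A : Finset V) (e : Sym2 V) (v : V) (d : ℕ) :
    matchingFactor δ A v (d + if v ∈ e then 1 else 0) =
      (if v ∈ e then (if v ∈ A then 1 else 0) else 1) *
        matchingFactor δ (A \ e.toFinset) v d := by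
  by_cases hv : v ∈ e
  · rcases d with _ | _ | d <;> by_cases hA : v ∈ A <;> simp [matchingFactor, hv, hA]
  · rcases d with _ | _ | d <;> simp [matchingFactor, hv]

noncomputable def centeredDegreeAverage (γ : ℂ) (δ : V → ℂ) (E : Finset (Sym2 V))
    (A : Finset V) : ℂ :=
  ∑ s ∈ E.powerset, γ ^ #s * (1 - γ) ^ #(E \ s) *
    ∏ v ∈ A, (δ v - ((degE v s : ℂ) - γ * degE v E))

lemma centeredDegreeAverage_insert (γ : ℂ) (δ : V → ℂ) {E : Finset (Sym2 V)} {e : Sym2 V}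
    (heE : e ∉ E) (he : ¬ e.IsDiag) (A : Finset V) :
    centeredDegreeAverage γ δ (insert e E) A =
      centeredDegreeAverage γ δ E A +
        (if e ∈ A.sym2 then γ - γ ^ 2 else 0) *
          centeredDegreeAverage γ δ E (A \ e.toFinset) := by
  set a : Finset (Sym2 V) → V → ℂ := fun s v => δ v - ((degE v s : ℂ) - γ * degE v E)
  have hs : ∀ s ∈ E.powerset, e ∉ s := fun s hs h => heE (mem_powerset.mp hs h)
  have hkeep : ∀ s ∈ E.powerset,
      γ ^ #s * (1 - γ) ^ #(insert e E \ s) *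
          ∏ v ∈ A, (δ v - ((degE v s : ℂ) - γ * degE v (insert e E))) =
        γ ^ #s * (1 - γ) ^ #(E \ s) *
          ((1 - γ) * ∏ v ∈ A, (a s v + γ * if v ∈ e then 1 else 0)) := by
    intro s hsE
    have hfac : ∀ v, δ v - ((degE v s : ℂ) - γ * degE v (insert e E)) =
        a s v + γ * if v ∈ e then 1 else 0 := fun v => by
      simp only [a, degE_insert heE]; push_cast; ring
    rw [insert_sdiff_of_notMem _ (hs s hsE), card_insert_of_notMem (by simp [heE]), pow_succ]
    simp only [hfac]
    ring
  have hadd : ∀ s ∈ E.powerset,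
      γ ^ #(insert e s) * (1 - γ) ^ #(insert e E \ insert e s) *
          ∏ v ∈ A, (δ v - ((degE v (insert e s) : ℂ) - γ * degE v (insert e E))) =
        γ ^ #s * (1 - γ) ^ #(E \ s) *
          (γ * ∏ v ∈ A, (a s v + (γ - 1) * if v ∈ e then 1 else 0)) := by
    intro s hsE
    have hfac : ∀ v, δ v - ((degE v (insert e s) : ℂ) - γ * degE v (insert e E)) =
        a s v + (γ - 1) * if v ∈ e then 1 else 0 := fun v => by
      simp only [a, degE_insert heE, degE_insert (hs s hsE)]; push_cast; ring
    rw [insert_sdiff_insert, sdiff_insert_of_notMem heE, card_insert_of_notMem (hs s hsE),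
      pow_succ]
    simp only [hfac]
    ring
  rw [centeredDegreeAverage, sum_powerset_insert heE, sum_congr rfl hkeep, sum_congr rfl hadd,
    ← sum_add_distrib, centeredDegreeAverage, centeredDegreeAverage, mul_sum, ← sum_add_distrib]
  refine sum_congr rfl fun s _ => ?_
  rw [← mul_add, prod_add_indicator_average he]
  ring

variable [Fintype V]

noncomputable def matchingSum (γ : ℂ) (δ : V → ℂ) (E : Finset (Sym2 V)) (A : Finset V) : ℂ :=
  ∑ M ∈ E.powerset, (γ - γ ^ 2) ^ #M * ∏ v, matchingFactor δ A v (degE v M)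

lemma matchingSum_insert (γ : ℂ) (δ : V → ℂ) {E : Finset (Sym2 V)} {e : Sym2 V}
    (heE : e ∉ E) (A : Finset V) :
    matchingSum γ δ (insert e E) A =
      matchingSum γ δ E A +
        (if e ∈ A.sym2 then γ - γ ^ 2 else 0) * matchingSum γ δ E (A \ e.toFinset) := by
  have hends : ∏ v, (if v ∈ e then (if v ∈ A then 1 else 0) else 1 : ℂ) =
      if e ∈ A.sym2 then 1 else 0 := by
    calc _ = ∏ v, (if v ∈ e → v ∈ A then 1 else 0 : ℂ) :=
          Fintype.prod_congr _ _ fun v => by by_cases hv : v ∈ e <;> simp [hv]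
      _ = _ := by simp only [Fintype.prod_boole, mem_sym2_iff]
  rw [matchingSum, sum_powerset_insert heE, matchingSum, matchingSum, mul_sum]
  congr 1
  refine sum_congr rfl fun M hM => ?_
  have heM : e ∉ M := fun h => heE (mem_powerset.mp hM h)
  simp only [degE_insert heM, matchingFactor_add_indicator, prod_mul_distrib, hends,
    card_insert_of_notMem heM]
  split_ifs <;> ring

lemma centeredDegreeAverage_eq_matchingSum (γ : ℂ) (δ : V → ℂ) {E : Finset (Sym2 V)}
    (hE : ∀ e ∈ E, ¬ e.IsDiag) (A : Finset V) :
    centeredDegreeAverage γ δ E A = matchingSum γ δ E A := by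
  induction E using Finset.induction_on generalizing A with
  | empty => simp [centeredDegreeAverage, matchingSum, degE, matchingFactor, prod_ite_mem]
  | insert e E heE ih =>
    have hE' : ∀ e ∈ E, ¬ e.IsDiag := fun e' he' => hE e' (mem_insert_of_mem he')
    rw [centeredDegreeAverage_insert γ δ heE (hE e (mem_insert_self e E)),
      matchingSum_insert γ δ heE, ih hE', ih hE']

lemma prod_matchingFactor_univ (δ : ℂ) {M : Finset (Sym2 V)} (hM : ∀ e ∈ M, ¬ e.IsDiag) :
    ∏ v, matchingFactor (fun _ => δ) univ v (degE v M) =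
      if ∀ v, degE v M ≤ 1 then δ ^ (Fintype.card V - 2 * #M) else 0 := by
  split_ifs with hmatch
  · have hcovered : #{v | ¬ degE v M = 0} = 2 * #M := by
      rw [← sum_degE hM, card_filter]
      exact sum_congr rfl fun v _ => by have := hmatch v; split_ifs <;> omega
    have huncovered : #{v | degE v M = 0} = Fintype.card V - 2 * #M := by
      have := card_filter_add_card_filter_not (s := univ) (fun v => degE v M = 0)
      rw [card_univ] at this
      omega
    rw [← huncovered, ← prod_const, prod_filter]
    refine Fintype.prod_congr _ _ fun v => ?_
    have := hmatch v
    interval_cases degE v M <;> simp [matchingFactor]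
  · obtain ⟨v, hv⟩ := not_forall.mp hmatch
    refine prod_eq_zero (mem_univ v) ?_
    rw [show degE v M = degE v M - 2 + 2 by omega]
    rfl

lemma two_mul_card_le_of_degE_le_one {M : Finset (Sym2 V)} (hM : ∀ e ∈ M, ¬ e.IsDiag)
    (hmatch : ∀ v, degE v M ≤ 1) : 2 * #M ≤ Fintype.card V := by
  rw [← sum_degE hM, ← card_univ, card_eq_sum_ones]
  exact sum_le_sum fun v _ => hmatch v

end

lemma chebFC_I_sub_inv_I (d : ℕ) :
    chebFC d (Complex.I - Complex.I⁻¹) = (1 - d) * Complex.I ^ d := by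
  have h2I : Complex.I - Complex.I⁻¹ = 2 * Complex.I := by rw [Complex.inv_I]; ring
  induction d using Nat.twoStepInduction with
  | zero => simp [chebFC]
  | one => simp [chebFC]
  | more n ih ih' =>
    rw [chebFC, ih', ih, h2I]
    push_cast
    linear_combination ((1 : ℂ) - n) * Complex.I ^ n * Complex.I_sq

section Graph

variable {V : Type} [Fintype V] [DecidableEq V] (G : SimpleGraph V) [DecidableRel G.Adj]

lemma degE_edgeFinset (v : V) : degE v G.edgeFinset = G.degree v := by
  rw [← G.card_incidenceFinset_eq_degree, G.incidenceFinset_eq_filter, degE]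

lemma thetaGI_eq_sum_powerset (β : ℂ) :
    thetaGI G β = ∑ s ∈ G.edgeFinset.powerset, (-β) ^ #s * ∏ v, (1 - (degE v s : ℂ)) := by
  refine sum_congr rfl fun s hs => ?_
  have hloopless : ∀ e ∈ s, ¬ e.IsDiag := fun e he =>
    G.not_isDiag_of_mem_edgeSet (G.mem_edgeFinset.mp (mem_powerset.mp hs he))
  rw [prod_congr rfl fun v _ => chebFC_I_sub_inv_I (degE v s), prod_mul_distrib,
    prod_pow_eq_pow_sum, sum_degE hloopless, pow_mul, Complex.I_sq, neg_pow β]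
  ring

lemma thetaGI_eq_centeredDegreeAverage {d : ℕ} (hdeg : ∀ v, degE v G.edgeFinset = d) {β : ℂ}
    (hβ : β ≠ 1) :
    thetaGI G β = (1 - β) ^ #G.edgeFinset *
      centeredDegreeAverage (-β / (1 - β)) (fun _ => 1 - -β / (1 - β) * d) G.edgeFinset univ := by
  set γ := -β / (1 - β)
  have h1β : 1 - β ≠ 0 := sub_ne_zero.mpr hβ.symm
  have hγ : γ * (1 - β) = -β := div_mul_cancel₀ _ h1β
  have hγ' : (1 - γ) * (1 - β) = 1 := by rw [sub_mul, hγ]; ring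
  rw [thetaGI_eq_sum_powerset, centeredDegreeAverage, mul_sum]
  refine sum_congr rfl fun s hs => ?_
  calc (-β) ^ #s * ∏ v, (1 - (degE v s : ℂ))
      = (γ * (1 - β)) ^ #s * ((1 - γ) * (1 - β)) ^ #(G.edgeFinset \ s) *
          ∏ v, (1 - (degE v s : ℂ)) := by rw [hγ, hγ', one_pow, mul_one]
    _ = _ := by
      rw [prod_congr rfl fun v _ => show 1 - γ * d - ((degE v s : ℂ) - γ * degE v G.edgeFinset) =
        1 - degE v s by rw [hdeg]; ring, ← card_sdiff_add_card_eq_card (mem_powerset.mp hs),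
        mul_pow, mul_pow, pow_add]
      ring

lemma matchingSum_edgeFinset_univ (γ δ : ℂ) :
    matchingSum γ (fun _ => δ) G.edgeFinset univ =
      ∑ k ∈ range (Fintype.card V / 2 + 1),
        (numMatchings G k : ℂ) * ((γ - γ ^ 2) ^ k * δ ^ (Fintype.card V - 2 * k)) := by
  have hloopless : ∀ M ∈ G.edgeFinset.powerset, ∀ e ∈ M, ¬ e.IsDiag := fun M hM e he =>
    G.not_isDiag_of_mem_edgeSet (G.mem_edgeFinset.mp (mem_powerset.mp hM he))
  rw [matchingSum, sum_congr rfl fun M hM => by rw [prod_matchingFactor_univ δ (hloopless M hM),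
    mul_ite, mul_zero], ← sum_filter]
  rw [← sum_fiberwise_of_maps_to' (g := card) (t := range (Fintype.card V / 2 + 1))
    (fun M hM => ?_) (fun k => (γ - γ ^ 2) ^ k * δ ^ (Fintype.card V - 2 * k))]
  · refine sum_congr rfl fun k _ => ?_
    rw [sum_const, nsmul_eq_mul, numMatchings, filter_filter]
    simp only [and_comm]
  · rw [mem_filter] at hM
    have := two_mul_card_le_of_degE_le_one (hloopless M hM.1) hM.2
    rw [mem_range]
    omega

end Graph

lemma matching_term_rescale {u : ℂ} (hu0 : u ≠ 0) (hu1 : u ^ 2 ≠ 1) (q : ℕ) {k n m : ℕ}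
    (hk : 2 * k ≤ n) (hn : n ≤ m) :
    (1 - u ^ 2) ^ m * ((-u ^ 2 / (1 - u ^ 2) - (-u ^ 2 / (1 - u ^ 2)) ^ 2) ^ k *
        (1 - -u ^ 2 / (1 - u ^ 2) * (q + 1 : ℕ)) ^ (n - 2 * k)) =
      (1 - u ^ 2) ^ (m - n) * ((-1) ^ k * (u⁻¹ + q * u) ^ (n - 2 * k)) * u ^ n := by
  have h1u : 1 - u ^ 2 ≠ 0 := sub_ne_zero.mpr hu1.symm
  have hpair : (1 - u ^ 2) ^ 2 * (-u ^ 2 / (1 - u ^ 2) - (-u ^ 2 / (1 - u ^ 2)) ^ 2) = -u ^ 2 := by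
    field_simp
    ring
  have hsingle : (1 - u ^ 2) * (1 - -u ^ 2 / (1 - u ^ 2) * (q + 1 : ℕ)) = u * (u⁻¹ + q * u) := by
    field_simp
    push_cast
    ring
  obtain ⟨j, rfl⟩ := Nat.exists_eq_add_of_le hk
  obtain ⟨i, rfl⟩ := Nat.exists_eq_add_of_le hn
  rw [Nat.add_sub_cancel_left, Nat.add_sub_cancel_left]
  calc
    _ = (1 - u ^ 2) ^ i *
          ((1 - u ^ 2) ^ 2 * (-u ^ 2 / (1 - u ^ 2) - (-u ^ 2 / (1 - u ^ 2)) ^ 2)) ^ k *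
          ((1 - u ^ 2) * (1 - -u ^ 2 / (1 - u ^ 2) * (q + 1 : ℕ))) ^ j := by
      rw [mul_pow, mul_pow, ← pow_mul, pow_add, pow_add]; ring
    _ = _ := by rw [hpair, hsingle, neg_pow, mul_pow]; ring

theorem stmt_18_general {V : Type} [Fintype V] [DecidableEq V]
    (G : SimpleGraph V) [DecidableRel G.Adj]
    -- a finite connected `(q+1)`-regular simple graph, `q ≥ 1`
    (q : ℕ) (hq : 1 ≤ q)
    (hreg : ∀ i : V, G.degree i = q + 1)
    (u : ℝ) (hu0 : u ≠ 0) (hu1 : u ^ 2 ≠ 1) :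
    thetaGI G ((u : ℂ) ^ 2) =
      (1 - (u : ℂ) ^ 2) ^ (G.edgeFinset.card - Fintype.card V) *
        -- the matching polynomial `α_G` evaluated at `1/u + q·u` ...
        (∑ k ∈ Finset.range (Fintype.card V / 2 + 1),
          (-1 : ℂ) ^ k * (numMatchings G k : ℂ) *
            ((u : ℂ)⁻¹ + (q : ℂ) * (u : ℂ)) ^ (Fintype.card V - 2 * k)) *
        -- ... times `u^n`
        (u : ℂ) ^ Fintype.card V := by
  have hdeg : ∀ v, degE v G.edgeFinset = q + 1 := fun v => (degE_edgeFinset G v).trans (hreg v)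
  have huC : (u : ℂ) ≠ 0 := by exact_mod_cast hu0
  have hu1C : (u : ℂ) ^ 2 ≠ 1 := by exact_mod_cast hu1
  have hloopless : ∀ e ∈ G.edgeFinset, ¬ e.IsDiag := fun e he =>
    G.not_isDiag_of_mem_edgeSet (G.mem_edgeFinset.mp he)
  have hcard : Fintype.card V ≤ #G.edgeFinset := by
    have := sum_degE hloopless
    simp only [hdeg, sum_const, card_univ, smul_eq_mul] at this
    nlinarith
  rw [thetaGI_eq_centeredDegreeAverage G hdeg hu1C,
    centeredDegreeAverage_eq_matchingSum _ _ hloopless, matchingSum_edgeFinset_univ,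
    mul_sum, mul_sum, sum_mul]
  refine sum_congr rfl fun k hk => ?_
  have hk : 2 * k ≤ Fintype.card V := by rw [mem_range] at hk; omega
  linear_combination (numMatchings G k : ℂ) * matching_term_rescale huC hu1C q hk hcard

theorem stmt_18 {V : Type} [Fintype V] [DecidableEq V]
    (G : SimpleGraph V) [DecidableRel G.Adj]
    -- a finite connected `(q+1)`-regular simple graph, `q ≥ 1`
    (q : ℕ) (hq : 1 ≤ q)
    (hconn : G.Connected) (hreg : ∀ i : V, G.degree i = q + 1)
    (u : ℝ) (hu0 : u ≠ 0) (hu1 : u ^ 2 ≠ 1) :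
    thetaGI G ((u : ℂ) ^ 2) =
      (1 - (u : ℂ) ^ 2) ^ (G.edgeFinset.card - Fintype.card V) *
        -- the matching polynomial `α_G` evaluated at `1/u + q·u` ...
        (∑ k ∈ Finset.range (Fintype.card V / 2 + 1),
          (-1 : ℂ) ^ k * (numMatchings G k : ℂ) *
            ((u : ℂ)⁻¹ + (q : ℂ) * (u : ℂ)) ^ (Fintype.card V - 2 * k)) *
        -- ... times `u^n`
        (u : ℂ) ^ Fintype.card V :=
  stmt_18_general G q hq hreg u hu0 hu1
end

section
/- Let V be a finite set, F a finite family of subsets of V, and for each λ ∈ F and each I ⊆ λ let β^λ_I be a real number, with the conventions β^λ_∅ = 1 and β^λ_I = 0 whenever |I| = 1. Let {ξ_i}_{i∈V} be positive reals. Then Σ_{x : V → {±1}} ∏_{λ∈F} ( Σ_{I ⊆ λ} β^λ_I ∏_{i∈I} x_i ξ_i^{−x_i} ) ∏_{i∈V} ξ_i^{x_i}/(ξ_i + ξ_i⁻¹) = Σ_{s ⊆ E_H} ∏_{λ∈F} (−1)^{|I_λ(s)|} β^λ_{I_λ(s)} ∏_{i∈V} f_{d_i(s)}(ξ_i − ξ_i⁻¹).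 -/
/-!
Expanding each factor `∑_{I ⊆ λ}` amounts to choosing a set `s ⊆ E_H` of edges, with
`I = I_λ(s)`. For fixed `s` the sum over spins factorizes over the vertices: vertex `i` with
`d = d_i(s)` contributes
`∑_{x = ±1} (x ξ^{-x})^d ξ^x / (ξ + ξ⁻¹) = (ξ^{1-d} + (-1)^d ξ^{d-1}) / (ξ + ξ⁻¹)`,
which the recursion of `f` identifies with `(-1)^d f_d(ξ - ξ⁻¹)`. Finally
`∏_i (-1)^{d_i(s)} = ∏_λ (-1)^{|I_λ(s)|}`, since both exponents count the edges of `s`.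
-/

/-- The polynomials `f_n` defined by `f_0 = 1`, `f_1 = 0`,
`f_{n+1}(x) = x f_n(x) + f_{n-1}(x)`. -/
def chebF : ℕ → ℝ → ℝ
  | 0, _ => 1
  | 1, _ => 0
  | n + 2, x => x * chebF (n + 1) x + chebF n x

/-- The spin `+1` or `-1` associated to a Boolean. -/
def sgn (b : Bool) : ℤ := if b then 1 else -1

open Finset

lemma neg_one_pow_mul_chebF_mul (x : ℝ) (hx : x ≠ 0) (d : ℕ) :
    (-1) ^ d * chebF d (x - x⁻¹) * (x + x⁻¹) = x⁻¹ ^ d * x + (-x) ^ d * x⁻¹ := by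
  have hinv : x * x⁻¹ = 1 := mul_inv_cancel₀ hx
  induction d using Nat.twoStepInduction with
  | zero => simp [chebF]
  | one => simp only [chebF]; ring
  | more n ih₀ ih₁ =>
    show (-1) ^ (n + 2) * ((x - x⁻¹) * chebF (n + 1) (x - x⁻¹) + chebF n (x - x⁻¹)) * _ = _
    linear_combination (-(x - x⁻¹)) * ih₁ + ih₀ - (x⁻¹ ^ n * x + (-x) ^ n * x⁻¹) * hinv

lemma sum_bool_sgn_mul_zpow (x : ℝ) (hx : 0 < x) (d : ℕ) :
    ∑ b : Bool, ((sgn b : ℝ) * x ^ (-sgn b)) ^ d * (x ^ sgn b / (x + x⁻¹))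
      = (-1) ^ d * chebF d (x - x⁻¹) := by
  have hden : x + x⁻¹ ≠ 0 := by positivity
  rw [eq_div_of_mul_eq hden (neg_one_pow_mul_chebF_mul x hx.ne' d), Fintype.sum_bool]
  simp only [sgn, if_true, Bool.false_eq_true, if_false, Int.cast_one, Int.cast_neg,
    zpow_one, zpow_neg, inv_inv, one_mul, neg_one_mul]
  ring

namespace FactorGraph

variable {V : Type} [DecidableEq V]

-- `edges F`, `link s lam` and `degree F s i` are the paper's `E_H`, `I_λ(s)` and `d_i(s)`.
def edges (F : Finset (Finset V)) : Finset (V × Finset V) :=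
  F.biUnion fun lam => lam.image fun i => (i, lam)

def link (s : Finset (V × Finset V)) (lam : Finset V) : Finset V :=
  lam.filter fun i => (i, lam) ∈ s

def degree (F : Finset (Finset V)) (s : Finset (V × Finset V)) (i : V) : ℕ :=
  (F.filter fun lam => (i, lam) ∈ s).card

lemma mem_edges {F : Finset (Finset V)} {e : V × Finset V} :
    e ∈ edges F ↔ e.2 ∈ F ∧ e.1 ∈ e.2 := by
  obtain ⟨i, lam⟩ := e
  simp only [edges, mem_biUnion, mem_image, Prod.mk.injEq]
  constructor
  · rintro ⟨lam, hlam, i, hi, rfl, rfl⟩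
    exact ⟨hlam, hi⟩
  · rintro ⟨hlam, hi⟩
    exact ⟨lam, hlam, i, hi, rfl, rfl⟩

def ofLinks (F : Finset (Finset V)) (p : ∀ lam ∈ F, Finset V) : Finset (V × Finset V) :=
  F.attach.biUnion fun lam => (p lam.1 lam.2).image fun i => (i, lam.1)

lemma mem_ofLinks {F : Finset (Finset V)} {p : ∀ lam ∈ F, Finset V} {e : V × Finset V} :
    e ∈ ofLinks F p ↔ ∃ h : e.2 ∈ F, e.1 ∈ p e.2 h := by
  obtain ⟨i, lam⟩ := e
  simp only [ofLinks, mem_biUnion, mem_attach, true_and, mem_image, Prod.mk.injEq,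
    Subtype.exists]
  constructor
  · rintro ⟨lam, hlam, i, hi, rfl, rfl⟩
    exact ⟨hlam, hi⟩
  · rintro ⟨hlam, hi⟩
    exact ⟨lam, hlam, i, hi, rfl, rfl⟩

lemma link_ofLinks {F : Finset (Finset V)} {p : ∀ lam ∈ F, Finset V}
    (hp : p ∈ F.pi fun lam => lam.powerset) {lam : Finset V} (hlam : lam ∈ F) :
    link (ofLinks F p) lam = p lam hlam := by
  have hsub : p lam hlam ⊆ lam := mem_powerset.1 (mem_pi.1 hp lam hlam)
  ext i
  simp only [link, mem_filter, mem_ofLinks]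
  exact ⟨fun ⟨_, _, hi⟩ => hi, fun hi => ⟨hsub hi, hlam, hi⟩⟩

lemma ofLinks_link {F : Finset (Finset V)} {s : Finset (V × Finset V)} (hs : s ⊆ edges F) :
    ofLinks F (fun lam _ => link s lam) = s := by
  ext e
  simp only [mem_ofLinks, link, mem_filter]
  refine ⟨fun ⟨_, _, he⟩ => he, fun he => ?_⟩
  obtain ⟨hlam, hi⟩ := mem_edges.1 (hs he)
  exact ⟨hlam, hi, he⟩

lemma ofLinks_subset_edges {F : Finset (Finset V)} {p : ∀ lam ∈ F, Finset V}
    (hp : p ∈ F.pi fun lam => lam.powerset) : ofLinks F p ⊆ edges F := by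
  intro e he
  obtain ⟨hlam, hi⟩ := mem_ofLinks.1 he
  exact mem_edges.2 ⟨hlam, mem_powerset.1 (mem_pi.1 hp e.2 hlam) hi⟩

lemma prod_sum_powerset_eq_sum_powerset_edges {R : Type*} [CommSemiring R]
    (F : Finset (Finset V)) (t : Finset V → Finset V → R) :
    ∏ lam ∈ F, ∑ I ∈ lam.powerset, t lam I
      = ∑ s ∈ (edges F).powerset, ∏ lam ∈ F, t lam (link s lam) := by
  rw [prod_sum]
  refine sum_bij' (fun p _ => ofLinks F p) (fun s _ lam _ => link s lam)
    (fun p hp => mem_powerset.2 (ofLinks_subset_edges hp))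
    (fun s _ => mem_pi.2 fun lam _ => mem_powerset.2 (filter_subset _ _))
    (fun p hp => funext₂ fun lam hlam => link_ofLinks hp hlam)
    (fun s hs => ofLinks_link (mem_powerset.1 hs)) fun p hp => ?_
  rw [← prod_attach F]
  exact prod_congr rfl fun lam _ => by rw [link_ofLinks hp lam.2]

variable [Fintype V] {F : Finset (Finset V)} {s : Finset (V × Finset V)}

lemma prod_prod_link_eq_prod_pow_degree {M : Type*} [CommMonoid M] (hs : s ⊆ edges F)
    (g : V → M) : ∏ lam ∈ F, ∏ i ∈ link s lam, g i = ∏ i, g i ^ degree F s i := by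
  rw [prod_comm' (t' := univ) (s' := fun i => F.filter fun lam => (i, lam) ∈ s)]
  · exact prod_congr rfl fun i _ => prod_const _
  · intro lam i
    have : (i, lam) ∈ s → i ∈ lam := fun h => (mem_edges.1 (hs h)).2
    simp only [link, mem_filter, mem_univ, and_true]
    tauto

lemma prod_pow_card_link {M : Type*} [CommMonoid M] (hs : s ⊆ edges F) (a : M) :
    ∏ lam ∈ F, a ^ (link s lam).card = ∏ i, a ^ degree F s i := by
  simpa only [prod_const] using prod_prod_link_eq_prod_pow_degree hs fun _ => a

lemma sum_prod_link_mul_prod_eq {S R : Type*} [Fintype S] [CommSemiring R] (hs : s ⊆ edges F)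
    (b : Finset V → R) (w ρ : V → S → R) :
    ∑ x : V → S, (∏ lam ∈ F, b lam * ∏ i ∈ link s lam, w i (x i)) * ∏ i, ρ i (x i)
      = (∏ lam ∈ F, b lam) * ∏ i, ∑ c, w i c ^ degree F s i * ρ i c := by
  simp only [Fintype.prod_sum, mul_sum, prod_mul_distrib, prod_prod_link_eq_prod_pow_degree hs,
    mul_assoc]

end FactorGraph

open FactorGraph in
theorem stmt_19_general {V : Type} [Fintype V] [DecidableEq V]
    -- a hypergraph: a finite family `F` of subsets of `V`
    (F : Finset (Finset V))
    -- the coefficients `β^λ_I`, with the conventions `β^λ_∅ = 1` and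
    -- `β^λ_I = 0` when `|I| = 1`
    (β : Finset V → Finset V → ℝ)
    (ξ : V → ℝ) (hξ : ∀ i, 0 < ξ i)
    -- the edge set `E_H` of the bipartite factor graph
    (EH : Finset (V × Finset V))
    (hEH : EH = F.biUnion fun lam => lam.image fun i => (i, lam)) :
    ∑ x : V → Bool,
      (∏ lam ∈ F, ∑ I ∈ lam.powerset,
          β lam I * ∏ i ∈ I, (sgn (x i) : ℝ) * ξ i ^ (-(sgn (x i)))) *
        ∏ i : V, ξ i ^ (sgn (x i)) / (ξ i + (ξ i)⁻¹)
    = ∑ s ∈ EH.powerset,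
        (∏ lam ∈ F,
          (-1 : ℝ) ^ (lam.filter fun i => (i, lam) ∈ s).card *
            β lam (lam.filter fun i => (i, lam) ∈ s)) *
        ∏ i : V, chebF ((F.filter fun lam => (i, lam) ∈ s).card) (ξ i - (ξ i)⁻¹) := by
  obtain rfl : EH = edges F := hEH
  simp only [← link.eq_1, ← degree.eq_1]
  calc _ = ∑ x : V → Bool, ∑ s ∈ (edges F).powerset,
          (∏ lam ∈ F, β lam (link s lam) *
            ∏ i ∈ link s lam, (sgn (x i) : ℝ) * ξ i ^ (-sgn (x i))) *
          ∏ i, ξ i ^ sgn (x i) / (ξ i + (ξ i)⁻¹) := by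
        simp only [prod_sum_powerset_eq_sum_powerset_edges, sum_mul]
    _ = ∑ s ∈ (edges F).powerset, (∏ lam ∈ F, β lam (link s lam)) *
          ∏ i, ∑ b : Bool, ((sgn b : ℝ) * ξ i ^ (-sgn b)) ^ degree F s i *
            (ξ i ^ sgn b / (ξ i + (ξ i)⁻¹)) := by
        rw [sum_comm]
        exact sum_congr rfl fun s hs => sum_prod_link_mul_prod_eq (mem_powerset.1 hs)
          (fun lam => β lam (link s lam)) (fun i b => (sgn b : ℝ) * ξ i ^ (-sgn b))
          (fun i b => ξ i ^ sgn b / (ξ i + (ξ i)⁻¹))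
    _ = _ := by
        refine sum_congr rfl fun s hs => ?_
        simp only [sum_bool_sgn_mul_zpow _ (hξ _), prod_mul_distrib,
          prod_pow_card_link (mem_powerset.1 hs)]
        ring

theorem stmt_19 {V : Type} [Fintype V] [DecidableEq V]
    -- a hypergraph: a finite family `F` of subsets of `V`
    (F : Finset (Finset V))
    -- the coefficients `β^λ_I`, with the conventions `β^λ_∅ = 1` and
    -- `β^λ_I = 0` when `|I| = 1`
    (β : Finset V → Finset V → ℝ)
    (hβ0 : ∀ lam ∈ F, β lam ∅ = 1)
    (hβ1 : ∀ lam ∈ F, ∀ I ⊆ lam, I.card = 1 → β lam I = 0)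
    (ξ : V → ℝ) (hξ : ∀ i, 0 < ξ i)
    -- the edge set `E_H` of the bipartite factor graph
    (EH : Finset (V × Finset V))
    (hEH : EH = F.biUnion fun lam => lam.image fun i => (i, lam)) :
    ∑ x : V → Bool,
      (∏ lam ∈ F, ∑ I ∈ lam.powerset,
          β lam I * ∏ i ∈ I, (sgn (x i) : ℝ) * ξ i ^ (-(sgn (x i)))) *
        ∏ i : V, ξ i ^ (sgn (x i)) / (ξ i + (ξ i)⁻¹)
    = ∑ s ∈ EH.powerset,
        (∏ lam ∈ F,
          (-1 : ℝ) ^ (lam.filter fun i => (i, lam) ∈ s).card *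
            β lam (lam.filter fun i => (i, lam) ∈ s)) *
        ∏ i : V, chebF ((F.filter fun lam => (i, lam) ∈ s).card) (ξ i - (ξ i)⁻¹) :=
  stmt_19_general F β ξ hξ EH hEH
end
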